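/- arXiv:1809.09585 — 10 statements merged into one kernel-verified Lean document; each statement's English description precedes it below -/
import Mathlib

section
/- The function f : ℝ → ℂ defined by f(t) = 1 for t ≥ 0, f(t) = 0 for t ≤ −1, and f(t) = t+1 for −1 ≤ t ≤ 0, is quasi-asymptotically almost periodic but not asymptotically almost periodic. -/
open Set Filter MeasureTheory

def IsQAAP {X : Type*} [NormedAddCommGroup X] (I : Set ℝ) (f : ℝ → X) : Prop :=
  ContinuousOn f I ∧ (∃ C, ∀ t ∈ I, ‖f t‖ ≤ C) ∧
  ∀ ε > (0:ℝ), ∃ L > (0:ℝ), ∀ a : ℝ, Set.Icc a (a + L) ⊆ I →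
    ∃ τ ∈ Set.Icc a (a + L), ∃ M > (0:ℝ),
      ∀ t ∈ I, M ≤ |t| → ‖f (t + τ) - f t‖ ≤ ε

def IsAAP {X : Type*} [NormedAddCommGroup X] (I : Set ℝ) (f : ℝ → X) : Prop :=
  ContinuousOn f I ∧ (∃ C, ∀ t ∈ I, ‖f t‖ ≤ C) ∧
  ∀ ε > (0:ℝ), ∃ l > (0:ℝ), ∃ M > (0:ℝ), ∀ a : ℝ, Set.Icc a (a + l) ⊆ I →
    ∃ τ ∈ Set.Icc a (a + l),
      ∀ t ∈ I, M ≤ |t| → M ≤ |t + τ| → ‖f (t + τ) - f t‖ ≤ ε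

lemma f_eq : (fun t : ℝ => if 0 ≤ t then (1:ℂ) else if t ≤ -1 then 0 else (t + 1 : ℝ))
    = fun t : ℝ => ((max 0 (min 1 (t + 1)) : ℝ) : ℂ) := by
  funext t
  split_ifs with h1 h2
  · rw [min_eq_left (by linarith), max_eq_right (by norm_num)]; norm_num
  · rw [min_eq_right (by linarith), max_eq_left (by linarith)]; norm_num
  · rw [min_eq_right (by linarith), max_eq_right (by linarith)]

/-- The function equal to 1 on [0,∞), 0 on (-∞,-1] and t+1 on [-1,0] is
quasi-asymptotically almost periodic but not asymptotically almost periodic. -/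
theorem qaap_not_aap_example :
    IsQAAP Set.univ (fun t : ℝ => if 0 ≤ t then (1:ℂ) else if t ≤ -1 then 0 else (t + 1 : ℝ)) ∧
    ¬ IsAAP Set.univ (fun t : ℝ => if 0 ≤ t then (1:ℂ) else if t ≤ -1 then 0 else (t + 1 : ℝ)) := by
  constructor
  · refine ⟨?_, ⟨1, ?_⟩, ?_⟩
    · rw [f_eq]
      exact (Complex.continuous_ofReal.comp
        (continuous_const.max ((continuous_const.min (continuous_id.add continuous_const))))).continuousOn
    · intro t _
      rw [f_eq]
      simp only [Complex.norm_real]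
      rw [Real.norm_eq_abs, abs_of_nonneg (le_max_left _ _)]
      exact max_le (by norm_num) (le_trans (min_le_left _ _) (by norm_num))
    · intro ε hε
      refine ⟨1, one_pos, fun a _ => ⟨a, ⟨le_refl a, by linarith⟩, |a| + 2, by positivity, ?_⟩⟩
      intro t _ ht
      rcases le_or_gt 0 t with h | h
      · rw [abs_of_nonneg h] at ht
        have h1 : 0 ≤ t + a := by linarith [neg_abs_le a]
        simp only [if_pos h1, if_pos h]
        simpa using hε.le
      · rw [abs_of_neg h] at ht
        have h1 : ¬ (0 ≤ t + a) := by linarith [le_abs_self a]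
        have h2 : t + a ≤ -1 := by linarith [le_abs_self a]
        have h3 : ¬ (0 ≤ t) := by linarith
        have h4 : t ≤ -1 := by linarith [abs_nonneg a]
        simp only [if_neg h1, if_pos h2, if_neg h3, if_pos h4]
        simpa using hε.le
  · rintro ⟨-, -, h⟩
    obtain ⟨l, hl, M, hM, h'⟩ := h (1/2) (by norm_num)
    obtain ⟨τ, hτ, hp⟩ := h' (-(2*M + l + 10)) (subset_univ _)
    have hτ2 : τ ≤ -(2*M) - 10 := by have := hτ.2; linarith
    set t : ℝ := -τ - M - 1 with htdef
    have ht0 : 0 ≤ t := by linarith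
    have ht1 : M ≤ |t| := by rw [abs_of_nonneg ht0]; linarith
    have ht2 : t + τ = -M - 1 := by ring
    have ht3 : M ≤ |t + τ| := by rw [ht2, abs_of_nonpos (by linarith)]; linarith
    have key := hp t (mem_univ t) ht1 ht3
    have e1 : ¬ (0 ≤ t + τ) := by rw [ht2]; linarith
    have e2 : t + τ ≤ -1 := by rw [ht2]; linarith
    simp only [if_neg e1, if_pos e2, if_pos ht0] at key
    norm_num at key
end

section
/- If f : I → X is bounded continuous, continuously differentiable, and f′(t) → 0 as |t| → ∞, then f is quasi-asymptotically almost periodic. -/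
open Set Filter MeasureTheory

/-- If f : I → X is bounded continuous, continuously differentiable, and
f′(t) → 0 as |t| → ∞, then f is quasi-asymptotically almost periodic. -/
theorem isQAAP_of_deriv_tendsto_zero {X : Type*} [NormedAddCommGroup X] [NormedSpace ℝ X]
    (I : Set ℝ) (hI : I = Set.univ ∨ I = Set.Ici 0) (f f' : ℝ → X)
    (hb : ∃ C, ∀ t ∈ I, ‖f t‖ ≤ C)
    (hderiv : ∀ t ∈ I, HasDerivAt f (f' t) t)
    (hcont' : ContinuousOn f' I)
    (hlim : Tendsto f' (Filter.comap (fun t => |t|) atTop ⊓ Filter.principal I) (nhds 0)) :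
    IsQAAP I f := by
  refine ⟨fun t ht => (hderiv t ht).continuousAt.continuousWithinAt, hb, ?_⟩
  intro ε hε
  refine ⟨1, one_pos, fun a ha => ?_⟩
  refine ⟨a, ⟨le_refl a, by linarith⟩, ?_⟩
  set δ : ℝ := ε / (|a| + 1) with hδdef
  have habs : (0:ℝ) < |a| + 1 := by positivity
  have hδ : 0 < δ := div_pos hε habs
  have h1 := Metric.tendsto_nhds.mp hlim δ hδ
  rw [Filter.eventually_inf_principal] at h1
  rw [Filter.eventually_comap] at h1
  rw [Filter.eventually_atTop] at h1
  obtain ⟨M₀, hM₀⟩ := h1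
  refine ⟨|M₀| + |a| + 1, by positivity, ?_⟩
  intro t ht hMt
  have hsmall : ∀ s ∈ I, M₀ ≤ |s| → ‖f' s‖ ≤ δ := by
    intro s hs hMs
    have := hM₀ |s| hMs s rfl hs
    rw [dist_zero_right] at this
    exact this.le
  -- the segment from t to t+a
  have hsub : Set.uIcc t (t + a) ⊆ I := by
    rcases hI with h | h
    · rw [h]; exact Set.subset_univ _
    · have haI : a ∈ I := ha ⟨le_refl a, by linarith⟩
      have ha0 : 0 ≤ a := by rwa [h] at haI
      have ht0 : 0 ≤ t := by rwa [h] at ht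
      rw [h]
      intro s hs
      have : min t (t + a) ≤ s := hs.1
      have hmin : min t (t + a) = t := min_eq_left (by linarith)
      simp only [Set.mem_Ici]
      rw [hmin] at this; linarith
  have hbound : ∀ s ∈ Set.uIcc t (t + a), ‖f' s‖ ≤ δ := by
    intro s hs
    refine hsmall s (hsub hs) ?_
    have h2 : |s - t| ≤ |(t + a) - t| := abs_sub_left_of_mem_uIcc hs
    have h3 : |(t + a) - t| = |a| := by ring_nf
    have h4 : |t| - |s - t| ≤ |s| := by
      have := abs_sub_abs_le_abs_sub s t
      have h5 : |t| ≤ |s| + |t - s| := by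
        have := abs_sub_abs_le_abs_sub t s
        linarith
      rw [abs_sub_comm t s] at h5
      linarith
    have h6 : 0 ≤ |M₀| := abs_nonneg _
    have h7 : M₀ ≤ |M₀| := le_abs_self _
    rw [h3] at h2
    linarith
  have hmvt := Convex.norm_image_sub_le_of_norm_hasDerivWithin_le
    (f := f) (f' := f') (C := δ) (s := Set.uIcc t (t + a))
    (fun x hx => (hderiv x (hsub hx)).hasDerivWithinAt) hbound (convex_uIcc _ _)
    Set.left_mem_uIcc Set.right_mem_uIcc
  have : ‖f (t + a) - f t‖ ≤ δ * ‖(t + a) - t‖ := hmvt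
  have heq : ‖(t + a) - t‖ = |a| := by rw [Real.norm_eq_abs]; ring_nf
  rw [heq] at this
  have : δ * |a| ≤ ε := by
    rw [hδdef, div_mul_eq_mul_div, div_le_iff₀ habs]
    nlinarith [le_abs_self a, abs_nonneg a]
  linarith
end

section
/- The function f(t) = sin(ln(1+t)) on [0,∞) is quasi-asymptotically almost periodic but not asymptotically almost periodic. -/
open Set Filter MeasureTheory

/-!
Since `log (1 + t)` grows ever more slowly, `f t = sin (log (1 + t))` satisfies
`|f (t + τ) - f t| ≤ τ / (1 + t)`, so every shift `τ ≥ 0` is an asymptotic period. The same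
estimate defeats asymptotic almost periodicity: given `l` and `M`, pick `x` with
`sin x` at distance `1` from `f M` and `exp x ≥ max (1 + M) (2 * l)`, and start the window at
`a = exp x - (1 + M)`; then `f (M + τ)` stays within `1/2` of `sin x` for all `τ ∈ [a, a + l]`.
-/

open Real Topology

theorem IsQAAP.of_tendsto_sub {X : Type*} [NormedAddCommGroup X] {f : ℝ → X}
    (hf : ContinuousOn f (Ici 0)) (hbdd : ∃ C, ∀ t ∈ Ici 0, ‖f t‖ ≤ C)
    (hper : ∀ τ ≥ 0, Tendsto (fun t => f (t + τ) - f t) atTop (𝓝 0)) :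
    IsQAAP (Ici 0) f := by
  refine ⟨hf, hbdd, fun ε hε => ⟨1, one_pos, fun a ha => ?_⟩⟩
  have ha : 0 ≤ a := ha (left_mem_Icc.2 (by linarith))
  obtain ⟨M, hM⟩ := eventually_atTop.1 <|
    (hper a ha).eventually (Metric.closedBall_mem_nhds 0 hε)
  refine ⟨a, ⟨le_rfl, by linarith⟩, max M 1, by positivity, fun t ht hMt => ?_⟩
  rw [abs_of_nonneg ht, max_le_iff] at hMt
  simpa using hM t hMt.1

theorem abs_log_add_sub_log_le {u d : ℝ} (hu : 0 < u) (hd : 0 ≤ d) :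
    |log (u + d) - log u| ≤ d / u := by
  rw [abs_of_nonneg (sub_nonneg.2 (log_le_log hu (by linarith))),
    ← log_div (by positivity) hu.ne']
  calc log ((u + d) / u) ≤ (u + d) / u - 1 := log_le_sub_one_of_pos (by positivity)
    _ = d / u := by field_simp; ring

theorem abs_sin_log_add_sub_le {u d : ℝ} (hu : 0 < u) (hd : 0 ≤ d) :
    |sin (log (u + d)) - sin (log u)| ≤ d / u :=
  (abs_sin_sub_sin_le _ _).trans (abs_log_add_sub_log_le hu hd)

theorem tendsto_sin_log_one_add_sub (τ : ℝ) (hτ : 0 ≤ τ) :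
    Tendsto (fun t => sin (log (1 + (t + τ))) - sin (log (1 + t))) atTop (𝓝 0) := by
  have hbound :
      ∀ᶠ t in atTop, ‖sin (log (1 + (t + τ))) - sin (log (1 + t))‖ ≤ τ / (1 + t) := by
    filter_upwards [eventually_ge_atTop 0] with t ht
    rw [norm_eq_abs, ← add_assoc]
    exact abs_sin_log_add_sub_le (by linarith) hτ
  exact squeeze_zero_norm' hbound <|
    tendsto_const_nhds.div_atTop (tendsto_atTop_add_const_left _ 1 tendsto_id)

theorem exists_ge_one_le_abs_sin_sub (c K : ℝ) : ∃ x ≥ K, 1 ≤ |sin x - c| := by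
  obtain ⟨n, hn⟩ := exists_nat_ge ((K + π) / (2 * π))
  have hn : K + π ≤ n * (2 * π) := by rwa [div_le_iff₀ (by positivity)] at hn
  have hπ := pi_pos
  rcases le_or_gt c 0 with hc | hc
  · refine ⟨π / 2 + n * (2 * π), by linarith, ?_⟩
    rw [sin_add_nat_mul_two_pi, sin_pi_div_two, abs_of_nonneg (by linarith)]
    linarith
  · refine ⟨-(π / 2) + n * (2 * π), by linarith, ?_⟩
    rw [sin_add_nat_mul_two_pi, sin_neg, sin_pi_div_two, abs_of_nonpos (by linarith)]
    linarith

theorem exists_window_half_le_abs_sin_log_sub (l M : ℝ) (hl : 0 < l) (hM : 0 ≤ M) :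
    ∃ a ≥ 0, ∀ τ ∈ Icc a (a + l),
      1 / 2 ≤ |sin (log (1 + (M + τ))) - sin (log (1 + M))| := by
  obtain ⟨x, hx, hfar⟩ :=
    exists_ge_one_le_abs_sin_sub (sin (log (1 + M))) (max (log (1 + M)) (log (2 * l)))
  rw [ge_iff_le, max_le_iff, log_le_iff_le_exp (by linarith), log_le_iff_le_exp (by linarith)] at hx
  refine ⟨exp x - (1 + M), by linarith, fun τ hτ => ?_⟩
  have hnear : |sin (log (1 + (M + τ))) - sin x| ≤ 1 / 2 := by
    have h := abs_sin_log_add_sub_le (exp_pos x) (d := 1 + (M + τ) - exp x) (by linarith [hτ.1])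
    rw [add_sub_cancel, log_exp] at h
    refine h.trans ?_
    rw [div_le_iff₀ (exp_pos x)]
    linarith [hτ.2]
  calc 1 / 2 ≤ |sin x - sin (log (1 + M))| - |sin (log (1 + (M + τ))) - sin x| := by linarith
    _ ≤ _ := by
      rw [abs_sub_comm (sin (log _))]
      linarith [abs_sub_le (sin x) (sin (log (1 + (M + τ)))) (sin (log (1 + M)))]

/-- t ↦ sin(ln(1+t)) on [0,∞) is quasi-asymptotically almost periodic but not
asymptotically almost periodic. -/
theorem sin_log_qaap_not_aap :
    IsQAAP (Set.Ici 0) (fun t : ℝ => Real.sin (Real.log (1 + t))) ∧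
    ¬ IsAAP (Set.Ici 0) (fun t : ℝ => Real.sin (Real.log (1 + t))) := by
  have hbdd : ∃ C, ∀ t ∈ Ici (0 : ℝ), ‖sin (log (1 + t))‖ ≤ C :=
    ⟨1, fun t _ => abs_sin_le_one _⟩
  have hcont : ContinuousOn (fun t : ℝ => sin (log (1 + t))) (Ici 0) :=
    continuous_sin.comp_continuousOn <|
      ContinuousOn.log (by fun_prop) fun t (ht : 0 ≤ t) => by positivity
  refine ⟨IsQAAP.of_tendsto_sub hcont hbdd tendsto_sin_log_one_add_sub, ?_⟩
  rintro ⟨-, -, h⟩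
  obtain ⟨l, hl, M, hM, h⟩ := h (1 / 4) (by norm_num)
  obtain ⟨a, ha, hwindow⟩ := exists_window_half_le_abs_sin_log_sub l M hl hM.le
  obtain ⟨τ, hτ, hclose⟩ := h a fun t ht => mem_Ici.2 (ha.trans ht.1)
  have hτ0 : 0 ≤ τ := ha.trans hτ.1
  have hsmall := hclose M hM.le (abs_of_pos hM).ge (by rw [abs_of_pos (by linarith)]; linarith)
  rw [norm_eq_abs] at hsmall
  linarith [hwindow τ hτ]
end

section
/- Every S-asymptotically ω-periodic function is quasi-asymptotically almost periodic: SAP_ω(I:X) ⊆ Q-AAP(I:X). -/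
open Set Filter MeasureTheory

lemma key_aux {X : Type*} [NormedAddCommGroup X] (f : ℝ → X) (I : Set ℝ)
    (ω M₀ ε' : ℝ) (hM : ∀ s ∈ I, M₀ ≤ |s| → ‖f (s + ω) - f s‖ ≤ ε') :
    ∀ m : ℕ, ∀ t : ℝ, (∀ k : ℕ, k < m → (t + k * ω) ∈ I ∧ M₀ ≤ |t + k * ω|) →
      ‖f (t + m * ω) - f t‖ ≤ m * ε' := by
  intro m
  induction m with
  | zero => intro t _; simp
  | succ m ih =>
    intro t h
    have h1 := h m (by omega)
    have step := hM (t + m * ω) h1.1 h1.2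
    have prev := ih t (fun k hk => h k (by omega))
    have e : t + ((m : ℝ) + 1) * ω = (t + m * ω) + ω := by ring
    have : ‖f (t + ((m:ℕ)+1) * ω) - f t‖
        ≤ ‖f ((t + m * ω) + ω) - f (t + m * ω)‖ + ‖f (t + m * ω) - f t‖ := by
      rw [e]
      exact (norm_sub_le_norm_sub_add_norm_sub _ _ _)
    push_cast
    calc ‖f (t + ((m : ℝ)+1) * ω) - f t‖ ≤ _ := by exact_mod_cast this
      _ ≤ ε' + m * ε' := add_le_add step prev
      _ = ((m : ℝ)+1) * ε' := by ring

/-- Every S-asymptotically ω-periodic function is quasi-asymptotically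
almost periodic: SAP_ω(I:X) ⊆ Q-AAP(I:X). -/
theorem isQAAP_of_sAsymptoticallyPeriodic {X : Type*} [NormedAddCommGroup X]
    (I : Set ℝ) (hI : I = Set.univ ∨ I = Set.Ici 0) (ω : ℝ) (hω : ω ∈ I) (hωpos : 0 < ω)
    (f : ℝ → X) (hc : ContinuousOn f I) (hb : ∃ C, ∀ t ∈ I, ‖f t‖ ≤ C)
    (hsap : Tendsto (fun t => ‖f (t + ω) - f t‖)
      (Filter.comap (fun t => |t|) atTop ⊓ Filter.principal I) (nhds 0)) :
    IsQAAP I f := by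
  refine ⟨hc, hb, ?_⟩
  intro ε hε
  refine ⟨2 * ω, by linarith, ?_⟩
  intro a haI
  set n : ℤ := ⌈a / ω⌉ with hn
  set m : ℕ := n.natAbs with hmdef
  set ε' : ℝ := ε / (m + 1) with hε'def
  have hε' : 0 < ε' := by positivity
  -- extract M₀ from hsap
  have h1 : ∀ᶠ t in Filter.comap (fun t => |t|) atTop ⊓ Filter.principal I,
      ‖f (t + ω) - f t‖ < ε' := by
    have := Metric.tendsto_nhds.mp hsap ε' hε'
    filter_upwards [this] with t ht
    simpa [Real.dist_eq, abs_of_nonneg (norm_nonneg _)] using ht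
  rw [Filter.eventually_inf_principal] at h1
  rw [Filter.eventually_comap] at h1
  rw [Filter.eventually_atTop] at h1
  obtain ⟨M₀, hM₀⟩ := h1
  have hM : ∀ s ∈ I, M₀ ≤ |s| → ‖f (s + ω) - f s‖ ≤ ε' := by
    intro s hs hMs
    exact le_of_lt (hM₀ |s| hMs s rfl hs)
  -- τ = n * ω
  have hτmem : (n : ℝ) * ω ∈ Set.Icc a (a + 2 * ω) := by
    constructor
    · have h := Int.le_ceil (a / ω)
      have := mul_le_mul_of_nonneg_right h hωpos.le
      rw [div_mul_cancel₀ _ hωpos.ne'] at this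
      exact this
    · have h := Int.ceil_lt_add_one (a / ω)
      have := mul_lt_mul_of_pos_right h hωpos
      rw [add_mul, div_mul_cancel₀ _ hωpos.ne'] at this
      nlinarith
  refine ⟨(n : ℝ) * ω, hτmem, max M₀ 0 + (m + 1) * ω, by positivity, ?_⟩
  intro t htI hMt
  have hmε : (m : ℝ) * ε' ≤ ε := by
    rw [hε'def]
    rw [mul_div_assoc']
    rw [div_le_iff₀ (by positivity)]
    nlinarith
  by_cases hn0 : 0 ≤ n
  · have hmn : ((m : ℕ) : ℝ) = (n : ℝ) := by
      rw [hmdef, Nat.cast_natAbs]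
      exact_mod_cast congrArg (Int.cast : ℤ → ℝ) (abs_of_nonneg hn0)
    have hcond : ∀ k : ℕ, k < m → (t + k * ω) ∈ I ∧ M₀ ≤ |t + k * ω| := by
      intro k hk
      have hkm : (k : ℝ) ≤ m := by exact_mod_cast hk.le
      rcases hI with h | h
      · subst h
        refine ⟨trivial, ?_⟩
        have habs : |t| - (k : ℝ) * ω ≤ |t + k * ω| := by
          have := abs_add_le (t + k * ω) (-(k * ω))
          simp only [add_neg_cancel_right] at this
          rw [abs_neg, abs_of_nonneg (by positivity : (0:ℝ) ≤ (k:ℝ) * ω)] at this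
          linarith
        have h2 : (k : ℝ) * ω ≤ m * ω := by nlinarith
        have h3 : M₀ ≤ max M₀ 0 := le_max_left _ _
        nlinarith [hMt, abs_nonneg t]
      · subst h
        have ht0 : (0 : ℝ) ≤ t := htI
        have : (0:ℝ) ≤ t + k * ω := by positivity
        refine ⟨this, ?_⟩
        rw [abs_of_nonneg this]
        have := le_max_left M₀ (0:ℝ)
        have habs : |t| = t := abs_of_nonneg ht0
        nlinarith
    have := key_aux f I ω M₀ ε' hM m t hcond
    rw [← hmn]
    exact le_trans this hmε
  · -- n < 0 : only possible when I = univ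
    push_neg at hn0
    have hIuniv : I = Set.univ := by
      rcases hI with h | h
      · exact h
      · exfalso
        have haI' : a ∈ I := haI ⟨le_refl a, by linarith⟩
        rw [h] at haI'
        have : (0:ℝ) ≤ a / ω := div_nonneg haI' hωpos.le
        have : (0:ℤ) ≤ n := Int.ceil_nonneg this
        omega
    have hmZ : (m : ℤ) = -n := by omega
    have hmn : ((m : ℝ)) = -(n : ℝ) := by exact_mod_cast congrArg (Int.cast : ℤ → ℝ) hmZ
    set t' : ℝ := t + n * ω with ht'
    have hcond : ∀ k : ℕ, k < m → (t' + k * ω) ∈ I ∧ M₀ ≤ |t' + k * ω| := by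
      intro k hk
      have hkm : (k : ℝ) ≤ m := by exact_mod_cast hk.le
      refine ⟨by rw [hIuniv]; trivial, ?_⟩
      have habs : |t| ≤ |t' + k * ω| + ((m : ℝ) - k) * ω := by
        have he : t = (t' + k * ω) + ((m : ℝ) - k) * ω := by rw [ht', hmn]; ring
        calc |t| = |(t' + k * ω) + ((m : ℝ) - k) * ω| := by rw [← he]
          _ ≤ |t' + k * ω| + |((m : ℝ) - k) * ω| := abs_add_le _ _
          _ = |t' + k * ω| + ((m : ℝ) - k) * ω := by
              rw [abs_of_nonneg (by nlinarith : (0:ℝ) ≤ ((m : ℝ) - k) * ω)]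
      have h3 : M₀ ≤ max M₀ 0 := le_max_left _ _
      nlinarith [abs_nonneg (t' + k * ω)]
    have hkey := key_aux f I ω M₀ ε' hM m t' hcond
    have he2 : t' + (m : ℝ) * ω = t := by rw [ht', hmn]; ring
    rw [he2] at hkey
    calc ‖f (t + n * ω) - f t‖ = ‖f t - f t'‖ := by rw [ht', norm_sub_rev]
      _ ≤ m * ε' := hkey
      _ ≤ ε := hmε
end

section
/- If (gₙ) is a sequence of quasi-asymptotically almost periodic functions converging uniformly to g : I → X, then g is quasi-asymptotically almost periodic. -/
open Set Filter MeasureTheory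

/-! An `ε/3`-translation number of an approximant `F n` that is uniformly `ε/3`-close to `f`
is an `ε`-translation number of `f`; this needs `t + τ ∈ I`, i.e. that `I` is closed under
addition. Continuity and boundedness pass to uniform limits as usual. -/

section UniformLimit

variable {ι α X : Type*} [NormedAddCommGroup X] {p : Filter ι} {s : Set α}
  {F : ι → α → X} {f : α → X}

theorem TendstoUniformlyOn.exists_dist_le_of_pos [p.NeBot] (h : TendstoUniformlyOn F f p s)
    {δ : ℝ} (hδ : 0 < δ) : ∃ n, ∀ t ∈ s, dist (f t) (F n t) ≤ δ :=
  ((Metric.tendstoUniformlyOn_iff.mp h δ hδ).exists).imp fun _ hn t ht => (hn t ht).le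

theorem TendstoUniformlyOn.exists_norm_le [p.NeBot] (h : TendstoUniformlyOn F f p s)
    (hF : ∀ n, ∃ C, ∀ t ∈ s, ‖F n t‖ ≤ C) : ∃ C, ∀ t ∈ s, ‖f t‖ ≤ C := by
  obtain ⟨n, hn⟩ := h.exists_dist_le_of_pos one_pos
  obtain ⟨C, hC⟩ := hF n
  refine ⟨C + 1, fun t ht => ?_⟩
  calc ‖f t‖ ≤ ‖F n t‖ + ‖f t - F n t‖ := norm_le_norm_add_norm_sub' _ _
    _ ≤ C + 1 := add_le_add (hC t ht) (dist_eq_norm (f t) (F n t) ▸ hn t ht)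

end UniformLimit

theorem dist_le_dist_add_of_forall_dist_le {α X : Type*} [PseudoMetricSpace X] {s : Set α}
    {f g : α → X} {δ : ℝ} (hfg : ∀ t ∈ s, dist (f t) (g t) ≤ δ) {x y : α} (hx : x ∈ s)
    (hy : y ∈ s) : dist (f x) (f y) ≤ dist (g x) (g y) + 2 * δ := by
  have := dist_triangle4 (f x) (g x) (g y) (f y)
  linarith [hfg x hx, dist_comm (f y) (g y) ▸ hfg y hy]

theorem IsQAAP.of_tendstoUniformlyOn {ι X : Type*} [NormedAddCommGroup X] {p : Filter ι}
    [p.NeBot] {I : Set ℝ} (hI : ∀ t ∈ I, ∀ τ ∈ I, t + τ ∈ I) {F : ι → ℝ → X} {f : ℝ → X}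
    (hF : ∀ n, IsQAAP I (F n)) (h : TendstoUniformlyOn F f p I) : IsQAAP I f := by
  refine ⟨h.continuousOn (Frequently.of_forall fun n => (hF n).1),
    h.exists_norm_le fun n => (hF n).2.1, fun ε hε => ?_⟩
  obtain ⟨n, hn⟩ := h.exists_dist_le_of_pos (by positivity : 0 < ε / 3)
  obtain ⟨L, hL, hLF⟩ := (hF n).2.2 (ε / 3) (by positivity)
  refine ⟨L, hL, fun a ha => ?_⟩
  obtain ⟨τ, hτ, M, hM, hMF⟩ := hLF a ha
  refine ⟨τ, hτ, M, hM, fun t ht hMt => ?_⟩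
  have hclose := dist_le_dist_add_of_forall_dist_le hn (hI t ht τ (ha hτ)) ht
  rw [dist_eq_norm, dist_eq_norm] at hclose
  linarith [hMF t ht hMt]

/-- A uniform limit of quasi-asymptotically almost periodic functions is
quasi-asymptotically almost periodic. -/
theorem isQAAP_of_tendstoUniformly {X : Type*} [NormedAddCommGroup X]
    (I : Set ℝ) (hI : I = Set.univ ∨ I = Set.Ici 0)
    (g : ℕ → ℝ → X) (glim : ℝ → X)
    (hg : ∀ n, IsQAAP I (g n))
    (hconv : TendstoUniformlyOn g glim atTop I) :
    IsQAAP I glim := by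
  refine IsQAAP.of_tendstoUniformlyOn ?_ hg hconv
  rcases hI with rfl | rfl
  · exact fun t _ τ _ => mem_univ _
  · exact fun t ht τ hτ => mem_Ici.mpr (add_nonneg ht hτ)
end

section
/- If f : ℝ → ℂ is quasi-asymptotically almost periodic and inf_{x∈ℝ} |f(x)| = m > 0, then 1/f is quasi-asymptotically almost periodic. -/
open Set Filter MeasureTheory

/-- If f : ℝ → ℂ is quasi-asymptotically almost periodic and
inf_{x∈ℝ} |f x| = m > 0, then 1/f is quasi-asymptotically almost periodic. -/
theorem isQAAP_inv {m : ℝ} (hm : 0 < m) (f : ℝ → ℂ)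
    (hf : IsQAAP Set.univ f)
    (hinf : IsGLB (Set.range fun x => ‖f x‖) m) :
    IsQAAP Set.univ (fun t => 1 / f t) := by
  obtain ⟨hcont, ⟨C, hC⟩, hqaap⟩ := hf
  have hlb : ∀ x, m ≤ ‖f x‖ := fun x => hinf.1 ⟨x, rfl⟩
  have hne : ∀ x, f x ≠ 0 := by
    intro x hx
    have := hlb x
    rw [hx] at this
    simp at this
    linarith
  refine ⟨?_, ⟨1 / m, fun t _ => ?_⟩, ?_⟩
  · exact continuousOn_const.div hcont fun x _ => hne x
  · rw [norm_div, norm_one]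
    exact one_div_le_one_div_of_le hm (hlb t)
  · intro ε hε
    obtain ⟨L, hL, h⟩ := hqaap (ε * m ^ 2) (by positivity)
    refine ⟨L, hL, fun a ha => ?_⟩
    obtain ⟨τ, hτ, M, hM, hb⟩ := h a ha
    refine ⟨τ, hτ, M, hM, fun t ht hMt => ?_⟩
    have hb' := hb t ht hMt
    have h1 : 1 / f (t + τ) - 1 / f t = (f t - f (t + τ)) / (f (t + τ) * f t) := by
      field_simp [hne (t + τ), hne t]
    rw [h1, norm_div, norm_mul,
      div_le_iff₀ (mul_pos (norm_pos_iff.mpr (hne _)) (norm_pos_iff.mpr (hne _)))]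
    calc ‖f t - f (t + τ)‖ = ‖f (t + τ) - f t‖ := by rw [norm_sub_rev]
      _ ≤ ε * m ^ 2 := hb'
      _ ≤ ε * (‖f (t + τ)‖ * ‖f t‖) := by
          apply mul_le_mul_of_nonneg_left _ hε.le
          rw [sq]
          exact mul_le_mul (hlb _) (hlb _) hm.le (norm_nonneg _)
end

section
/- If f : I → X is quasi-asymptotically almost periodic, then for any a ∈ I and b ∈ I \ {0}, the functions t ↦ f(t+a) and t ↦ f(bt) are quasi-asymptotically almost periodic. -/
open Set Filter MeasureTheory

/-! The translate keeps the same ε-periods, with the threshold `M` enlarged by `|a|`. For the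
dilate, multiplication by `b` maps an interval of length `L / |b|` inside `I` onto an interval of
length `L` inside `I`; a period `τ` of `f` found there gives the period `τ / b` of
`t ↦ f (b t)`, with threshold `M / |b|`. -/

theorem image_const_mul_Icc_add_div_abs {b : ℝ} (hb : b ≠ 0) (a : ℝ) {L : ℝ} (hL : 0 ≤ L) :
    ∃ c, (b * ·) '' Icc a (a + L / |b|) = Icc c (c + L) := by
  have hlen : |b * a - b * (a + L / |b|)| = L := by
    rw [← mul_sub, sub_add_cancel_left, abs_mul, abs_neg, abs_div, abs_abs,
      abs_of_nonneg hL, mul_div_cancel₀ _ (abs_ne_zero.mpr hb)]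
  refine ⟨min (b * a) (b * (a + L / |b|)), ?_⟩
  rw [← uIcc_of_le (le_add_of_nonneg_right (by positivity)), image_const_mul_uIcc, uIcc]
  congr 1
  rw [← max_sub_min_eq_abs'] at hlen
  linarith

namespace IsQAAP

variable {X : Type*} [NormedAddCommGroup X] {I : Set ℝ} {f : ℝ → X}

theorem comp_add_right (hf : IsQAAP I f) {a : ℝ} (hmaps : MapsTo (· + a) I I) :
    IsQAAP I (fun t => f (t + a)) := by
  obtain ⟨hcont, ⟨C, hC⟩, hper⟩ := hf
  refine ⟨hcont.comp (by fun_prop) hmaps, ⟨C, fun t ht => hC _ (hmaps ht)⟩, fun ε hε => ?_⟩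
  obtain ⟨L, hL, hperL⟩ := hper ε hε
  refine ⟨L, hL, fun c hc => ?_⟩
  obtain ⟨τ, hτ, M, hM, hMτ⟩ := hperL c hc
  refine ⟨τ, hτ, M + |a|, by positivity, fun t ht hMt => ?_⟩
  have hMta : M ≤ |t + a| := by
    have := abs_sub_abs_le_abs_sub t (-a)
    rw [abs_neg, sub_neg_eq_add] at this
    linarith
  simpa only [add_right_comm t τ a] using hMτ (t + a) (hmaps ht) hMta

theorem comp_const_mul (hf : IsQAAP I f) {b : ℝ} (hb : b ≠ 0) (hmaps : MapsTo (b * ·) I I) :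
    IsQAAP I (fun t => f (b * t)) := by
  obtain ⟨hcont, ⟨C, hC⟩, hper⟩ := hf
  refine ⟨hcont.comp (by fun_prop) hmaps, ⟨C, fun t ht => hC _ (hmaps ht)⟩, fun ε hε => ?_⟩
  have hb' : 0 < |b| := abs_pos.mpr hb
  obtain ⟨L, hL, hperL⟩ := hper ε hε
  refine ⟨L / |b|, by positivity, fun c hc => ?_⟩
  obtain ⟨d, hd⟩ := image_const_mul_Icc_add_div_abs hb c hL.le
  have hdI : Icc d (d + L) ⊆ I := hd ▸ (image_mono hc).trans hmaps.image_subset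
  obtain ⟨τ, hτ, M, hM, hMτ⟩ := hperL d hdI
  obtain ⟨σ, hσ, rfl⟩ : τ ∈ (b * ·) '' Icc c (c + L / |b|) := hd ▸ hτ
  refine ⟨σ, hσ, M / |b|, by positivity, fun t ht hMt => ?_⟩
  have hMbt : M ≤ |b * t| := by
    rw [abs_mul]
    exact (div_le_iff₀' hb').mp hMt
  simpa only [mul_add] using hMτ (b * t) (hmaps ht) hMbt

end IsQAAP

/-- Translations and dilations of a quasi-asymptotically almost periodic
function are quasi-asymptotically almost periodic. -/
theorem isQAAP_translate_dilate {X : Type*} [NormedAddCommGroup X]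
    (I : Set ℝ) (hI : I = Set.univ ∨ I = Set.Ici 0) (f : ℝ → X)
    (hf : IsQAAP I f) (a b : ℝ) (ha : a ∈ I) (hb : b ∈ I) (hb0 : b ≠ 0) :
    IsQAAP I (fun t => f (t + a)) ∧ IsQAAP I (fun t => f (b * t)) := by
  have hmaps_add : MapsTo (· + a) I I := by
    rcases hI with rfl | rfl
    exacts [mapsTo_univ _ _, fun t (ht : 0 ≤ t) => mem_Ici.mpr (add_nonneg ht ha)]
  have hmaps_mul : MapsTo (b * ·) I I := by
    rcases hI with rfl | rfl
    exacts [mapsTo_univ _ _, fun t (ht : 0 ≤ t) => mem_Ici.mpr (mul_nonneg hb ht)]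
  exact ⟨hf.comp_add_right hmaps_add, hf.comp_const_mul hb0 hmaps_mul⟩
end

section
/- Let f : I → X and g : I → ℂ be bounded. If f belongs to Q_h-AAP(I:X) and g to Q-AAP(I:ℂ), then the pointwise product fg belongs to Q-AAP(I:X). -/
/-!
Write `(g • f)(t + τ) - (g • f)(t) = g(t + τ) • (f(t + τ) - f(t)) + (g(t + τ) - g(t)) • f(t)`.
Take `τ` to be a `δ`-almost period of `g` from any window of length `L(δ)`; since `f` is
Q_h-AAP, this same `τ` is eventually also a `δ`-almost period of `f`, so for large `|t|` both
terms are `O(δ)` by boundedness of `f` and `g`.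
-/

open Set Filter MeasureTheory

/-- Q_h-AAP: for each ε > 0 and *every* τ ∈ I there is M(ε,τ) > 0 such that
‖f(t+τ) − f t‖ ≤ ε whenever t ∈ I and |t| ≥ M(ε,τ). -/
def IsQhAAP {X : Type*} [NormedAddCommGroup X] (I : Set ℝ) (f : ℝ → X) : Prop :=
  ContinuousOn f I ∧ (∃ C, ∀ t ∈ I, ‖f t‖ ≤ C) ∧
  ∀ ε > (0:ℝ), ∀ τ ∈ I, ∃ M > (0:ℝ),
    ∀ t ∈ I, M ≤ |t| → ‖f (t + τ) - f t‖ ≤ ε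

theorem norm_smul_sub_smul_le_of_le {𝕜 E : Type*} [NormedField 𝕜] [SeminormedAddCommGroup E]
    [NormedSpace 𝕜 E] {a a' : 𝕜} {x x' : E} {A B δ : ℝ} (ha : ‖a‖ ≤ A) (hx : ‖x‖ ≤ B)
    (ha' : ‖a' - a‖ ≤ δ) (hx' : ‖x' - x‖ ≤ δ) :
    ‖a' • x' - a • x‖ ≤ (A + B + δ) * δ := by
  have hδ : 0 ≤ δ := (norm_nonneg _).trans ha'
  have ha'A : ‖a'‖ ≤ A + δ := by linarith [norm_sub_norm_le a' a]
  calc ‖a' • x' - a • x‖ = ‖a' • (x' - x) + (a' - a) • x‖ := by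
        rw [smul_sub, sub_smul, sub_add_sub_cancel]
    _ ≤ ‖a'‖ * ‖x' - x‖ + ‖a' - a‖ * ‖x‖ := by
        grw [norm_add_le, norm_smul, norm_smul]
    _ ≤ (A + δ) * δ + δ * B := by
        gcongr
        linarith [norm_nonneg a]
    _ = (A + B + δ) * δ := by ring

theorem exists_pos_add_mul_le (A : ℝ) {ε : ℝ} (hε : 0 < ε) : ∃ δ > 0, (A + δ) * δ ≤ ε := by
  refine ⟨min 1 (ε / (|A| + 1)), by positivity, ?_⟩
  have h1 : min 1 (ε / (|A| + 1)) ≤ 1 := min_le_left _ _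
  have h2 : min 1 (ε / (|A| + 1)) ≤ ε / (|A| + 1) := min_le_right _ _
  calc (A + min 1 (ε / (|A| + 1))) * min 1 (ε / (|A| + 1))
      ≤ (|A| + 1) * (ε / (|A| + 1)) := by
        gcongr
        linarith [le_abs_self A]
    _ = ε := by field_simp

theorem isQAAP_smul_general {X : Type*} [NormedAddCommGroup X] [NormedSpace ℂ X]
    (I : Set ℝ)
    (f : ℝ → X) (g : ℝ → ℂ)
    (hf : IsQhAAP I f) (hg : IsQAAP I g) :
    IsQAAP I (fun t => g t • f t) := by
  obtain ⟨hfc, ⟨Cf, hCf⟩, hfq⟩ := hf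
  obtain ⟨hgc, ⟨Cg, hCg⟩, hgq⟩ := hg
  refine ⟨hgc.smul hfc, ⟨Cg * Cf, fun t ht => ?_⟩, fun ε hε => ?_⟩
  · rw [norm_smul]
    exact mul_le_mul (hCg t ht) (hCf t ht) (norm_nonneg _) ((norm_nonneg _).trans (hCg t ht))
  obtain ⟨δ, hδ, hδε⟩ := exists_pos_add_mul_le (Cg + Cf) hε
  obtain ⟨L, hL, hgL⟩ := hgq δ hδ
  refine ⟨L, hL, fun a ha => ?_⟩
  obtain ⟨τ, hτ, Mg, -, hgτ⟩ := hgL a ha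
  obtain ⟨Mf, hMf, hfτ⟩ := hfq δ hδ τ (ha hτ)
  refine ⟨τ, hτ, max Mf Mg, lt_max_of_lt_left hMf, fun t ht hMt => ?_⟩
  refine (norm_smul_sub_smul_le_of_le (hCg t ht) (hCf t ht) ?_ ?_).trans hδε
  · exact hgτ t ht ((le_max_right _ _).trans hMt)
  · exact hfτ t ht ((le_max_left _ _).trans hMt)

/-- If f ∈ Q_h-AAP(I:X) and g ∈ Q-AAP(I:ℂ) are bounded, then fg ∈ Q-AAP(I:X). -/
theorem isQAAP_smul {X : Type*} [NormedAddCommGroup X] [NormedSpace ℂ X]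
    (I : Set ℝ) (hI : I = Set.univ ∨ I = Set.Ici 0)
    (f : ℝ → X) (g : ℝ → ℂ)
    (hf : IsQhAAP I f) (hg : IsQAAP I g) :
    IsQAAP I (fun t => g t • f t) :=
  isQAAP_smul_general I f g hf hg
end

section
/- Let (R(t))_{t>0} ⊆ L(X,Y) be a strongly continuous operator family with ∫_0^∞ ‖R(s)‖ ds < ∞. If f : [0,∞) → X is quasi-asymptotically almost periodic, then F(t) = ∫_0^t R(t−s) f(s) ds is quasi-asymptotically almost periodic from [0,∞) into Y. -/
open Set Filter MeasureTheory

/-!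
Substituting `u = t - s` and extending `f` by zero to `g` on `(-∞, 0)` gives
`F t = ∫ u in Ioi 0, R u (g (t - u))`. Since `g` is continuous off `0`, continuity of `F` follows
by dominated convergence. For an almost period `τ` of `f`, split the integral of
`R u (g (t + τ - u) - g (t - u))` at a point `T` beyond which `∫ ‖R‖` is small: on `(0, T]` the
integrand is small once `t - T` exceeds the threshold `M` of `f`, and the tail is at most
`2 sup ‖f‖ ∫_T^∞ ‖R‖`.
-/

open Topology

namespace MeasureTheory.AEStronglyMeasurable

variable {α 𝕜 X Y : Type*} [MeasurableSpace α] {μ : Measure α} [NontriviallyNormedField 𝕜]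
  [NormedAddCommGroup X] [NormedSpace 𝕜 X] [NormedAddCommGroup Y] [NormedSpace 𝕜 Y]

theorem clm_apply_of_apply {φ : α → X →L[𝕜] Y}
    (hφ : ∀ x, AEStronglyMeasurable (fun a => φ a x) μ) {g : α → X}
    (hg : AEStronglyMeasurable g μ) : AEStronglyMeasurable (fun a => φ a (g a)) μ := by
  obtain ⟨g', hg', hgg'⟩ := hg
  have happrox : ∀ n, AEStronglyMeasurable (fun a => φ a (hg'.approx n a)) μ := by
    intro n
    have hsum : (fun a => φ a (hg'.approx n a)) = fun a => ∑ x ∈ (hg'.approx n).range,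
        ((hg'.approx n) ⁻¹' {x}).indicator (fun a => φ a x) a := by
      funext a
      rw [Finset.sum_eq_single_of_mem _ (SimpleFunc.mem_range_self _ a)]
      · rw [indicator_of_mem (by simp)]
      · intro x _ hx
        exact indicator_of_notMem (by simp [Ne.symm hx]) _
    rw [hsum]
    exact Finset.aestronglyMeasurable_fun_sum _ fun x _ =>
      (hφ x).indicator ((hg'.approx n).measurableSet_fiber x)
  refine (aestronglyMeasurable_of_tendsto_ae atTop happrox
    (ae_of_all _ fun a => ((φ a).continuous.tendsto _).comp (hg'.tendsto_approx a))).congr ?_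
  filter_upwards [hgg'] with a ha
  rw [ha]

theorem comp_sub_left {g : ℝ → X} (hg : AEStronglyMeasurable g) (t : ℝ) :
    AEStronglyMeasurable (fun u => g (t - u)) :=
  hg.comp_quasiMeasurePreserving (quasiMeasurePreserving_sub_left_of_right_invariant volume t)

end MeasureTheory.AEStronglyMeasurable

theorem mul_div_add_one_le {a b : ℝ} (ha : 0 ≤ a) (hb : 0 ≤ b) : a * (b / (a + 1)) ≤ b := by
  rw [mul_div_assoc', div_le_iff₀ (by linarith)]
  nlinarith

theorem tendsto_setIntegral_Ioi_atTop {E : Type*} [NormedAddCommGroup E] [NormedSpace ℝ E]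
    {f : ℝ → E} {a : ℝ} (hf : IntegrableOn f (Ioi a)) :
    Tendsto (fun T => ∫ x in Ioi T, f x) atTop (𝓝 0) := by
  have hempty : ⋂ T : ℝ, Ioi T = ∅ := iInter_eq_empty_iff.2 fun x => ⟨x, lt_irrefl x⟩
  simpa [hempty] using tendsto_setIntegral_of_antitone (fun T => measurableSet_Ioi)
    (fun _ _ h => Ioi_subset_Ioi h) ⟨a, hf⟩

theorem IsQAAP.congr {X : Type*} [NormedAddCommGroup X] {I : Set ℝ} {f g : ℝ → X}
    (hg : IsQAAP I g) (hfg : EqOn f g I) (hI : ∀ x ∈ I, ∀ y ∈ I, x + y ∈ I) : IsQAAP I f := by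
  obtain ⟨hgc, ⟨C, hC⟩, hgq⟩ := hg
  refine ⟨hgc.congr hfg, ⟨C, fun t ht => hfg ht ▸ hC t ht⟩, fun ε hε => ?_⟩
  obtain ⟨L, hL, hLq⟩ := hgq ε hε
  refine ⟨L, hL, fun a ha => ?_⟩
  obtain ⟨τ, hτ, M, hM, hτq⟩ := hLq a ha
  refine ⟨τ, hτ, M, hM, fun t ht htM => ?_⟩
  rw [hfg ht, hfg (hI t ht τ (ha hτ))]
  exact hτq t ht htM

theorem ContinuousOn.continuousAt_indicator_Ici {X : Type*} [TopologicalSpace X] [Zero X]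
    {f : ℝ → X} (hf : ContinuousOn f (Ici 0)) {s : ℝ} (hs : s ≠ 0) :
    ContinuousAt ((Ici 0).indicator f) s := by
  rcases hs.lt_or_gt with hneg | hpos
  · refine (continuousAt_const (y := (0 : X))).congr ?_
    filter_upwards [Iio_mem_nhds hneg] with r hr
    exact (indicator_of_notMem (not_le.2 hr) f).symm
  · refine (hf.continuousAt (Ici_mem_nhds hpos)).congr ?_
    filter_upwards [Ici_mem_nhds hpos] with r hr
    exact (indicator_of_mem hr f).symm

section OperatorFamily

variable {X Y : Type*} [NormedAddCommGroup X] [NormedSpace ℝ X]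
  [NormedAddCommGroup Y] [NormedSpace ℝ Y]

section Measure

variable {α : Type*} [MeasurableSpace α] {μ : Measure α} {R : α → X →L[ℝ] Y} {h : α → X} {C : ℝ}

theorem integrable_clm_apply (hR : Integrable (fun a => ‖R a‖) μ)
    (hRm : ∀ x, AEStronglyMeasurable (fun a => R a x) μ) (hhm : AEStronglyMeasurable h μ)
    (hhC : ∀ a, ‖h a‖ ≤ C) : Integrable (fun a => R a (h a)) μ :=
  (hR.mul_const C).mono' (hhm.clm_apply_of_apply hRm)
    (ae_of_all _ fun a => (R a).le_opNorm_of_le (hhC a))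

theorem norm_integral_clm_apply_le (hR : Integrable (fun a => ‖R a‖) μ)
    (hhC : ∀ᵐ a ∂μ, ‖h a‖ ≤ C) : ‖∫ a, R a (h a) ∂μ‖ ≤ (∫ a, ‖R a‖ ∂μ) * C := by
  rw [← integral_mul_const]
  exact norm_integral_le_of_norm_le (hR.mul_const C) (hhC.mono fun a ha => (R a).le_opNorm_of_le ha)

end Measure

variable {R : ℝ → X →L[ℝ] Y} {g : ℝ → X} {C : ℝ}

theorem intervalIntegral_clm_apply_sub_eq_integral_Ioi (R : ℝ → X →L[ℝ] Y) (f : ℝ → X)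
    {t : ℝ} (ht : 0 ≤ t) :
    ∫ s in (0:ℝ)..t, R (t - s) (f s) = ∫ u in Ioi 0, R u ((Ici 0).indicator f (t - u)) := by
  have hsub : ∫ s in (0:ℝ)..t, R (t - s) (f s) = ∫ u in Ioc 0 t, R u (f (t - u)) := by
    simpa only [sub_sub_cancel, sub_self, sub_zero, intervalIntegral.integral_of_le ht] using
      intervalIntegral.integral_comp_sub_left (fun u => R u (f (t - u))) t (a := 0) (b := t)
  have hIoc : Ioi 0 ∩ Ioc 0 t = Ioc 0 t := inter_eq_right.2 Ioc_subset_Ioi_self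
  rw [hsub, ← hIoc, ← setIntegral_indicator measurableSet_Ioc]
  refine setIntegral_congr_fun measurableSet_Ioi fun u hu => ?_
  by_cases hut : u ≤ t
  · simp [indicator, hut, mem_Ioi.1 hu]
  · simp [indicator, hut]

theorem continuous_setIntegral_clm_apply_comp_sub {s : Set ℝ}
    (hR : IntegrableOn (fun u => ‖R u‖) s)
    (hRm : ∀ x, AEStronglyMeasurable (fun u => R u x) (volume.restrict s))
    (hgm : AEStronglyMeasurable g) (hgC : ∀ r, ‖g r‖ ≤ C)
    (hgc : ∀ r ≠ 0, ContinuousAt g r) :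
    Continuous fun t => ∫ u in s, R u (g (t - u)) := by
  refine continuous_iff_continuousAt.2 fun t₀ => continuousAt_of_dominated
    (.of_forall fun t => (hgm.comp_sub_left t).restrict.clm_apply_of_apply hRm)
    (.of_forall fun t => ae_of_all _ fun u => (R u).le_opNorm_of_le (hgC _)) (hR.mul_const C) ?_
  -- `t ↦ g (t - u)` can only jump at `t = u`, a null set of `u`
  have hne : ∀ᵐ u ∂(volume.restrict s), u ≠ t₀ :=
    ae_restrict_of_ae (by simp [ae_iff, measure_singleton])
  filter_upwards [hne] with u hu
  exact (R u).continuous.continuousAt.comp ((hgc _ (sub_ne_zero.2 hu.symm)).comp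
    (f := fun t => t - u) (continuousAt_id.sub continuousAt_const))

theorem norm_integral_Ioi_clm_apply_comp_sub_sub_le (hR : IntegrableOn (fun u => ‖R u‖) (Ioi 0))
    (hRm : ∀ x, AEStronglyMeasurable (fun u => R u x) (volume.restrict (Ioi 0)))
    (hgm : AEStronglyMeasurable g) (hgC : ∀ r, ‖g r‖ ≤ C) {T δ M τ ε t : ℝ} (hT : 0 ≤ T)
    (hRT : ∫ u in Ioi T, ‖R u‖ ≤ δ) (hgτ : ∀ r ≥ M, ‖g (r + τ) - g r‖ ≤ ε) (ht : M + T ≤ t) :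
    ‖(∫ u in Ioi 0, R u (g (t + τ - u))) - ∫ u in Ioi 0, R u (g (t - u))‖
      ≤ (∫ u in Ioi 0, ‖R u‖) * ε + 2 * C * δ := by
  have hint : ∀ t', IntegrableOn (fun u => R u (g (t' - u))) (Ioi 0) := fun t' =>
    integrable_clm_apply hR hRm (hgm.comp_sub_left t').restrict fun u => hgC _
  have hdiff : IntegrableOn (fun u => R u (g (t + τ - u) - g (t - u))) (Ioi 0) := by
    simpa only [Pi.sub_def, map_sub] using (hint (t + τ)).sub (hint t)
  have hC : 0 ≤ C := (norm_nonneg _).trans (hgC 0)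
  have hε : 0 ≤ ε := (norm_nonneg _).trans (hgτ M le_rfl)
  rw [← integral_sub (hint _) (hint _)]
  simp only [← map_sub]
  have hsplit := setIntegral_union Ioc_disjoint_Ioi_same measurableSet_Ioi
    (hdiff.mono_set Ioc_subset_Ioi_self) (hdiff.mono_set (Ioi_subset_Ioi hT))
  rw [Ioc_union_Ioi_eq_Ioi hT] at hsplit
  rw [hsplit]
  refine (norm_add_le _ _).trans (add_le_add ?_ ?_)
  · calc _ ≤ (∫ u in Ioc 0 T, ‖R u‖) * ε := by
          refine norm_integral_clm_apply_le (hR.mono_set Ioc_subset_Ioi_self)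
            (ae_restrict_of_forall_mem measurableSet_Ioc fun u hu => ?_)
          simpa only [sub_add_eq_add_sub] using hgτ (t - u) (by linarith [hu.2])
      _ ≤ (∫ u in Ioi 0, ‖R u‖) * ε := by
          gcongr
          · exact ae_of_all _ fun _ => norm_nonneg _
          · exact Ioc_subset_Ioi_self
  · calc _ ≤ (∫ u in Ioi T, ‖R u‖) * (2 * C) :=
          norm_integral_clm_apply_le (hR.mono_set (Ioi_subset_Ioi hT)) (ae_of_all _ fun u =>
            (norm_sub_le _ _).trans (by linarith [hgC (t + τ - u), hgC (t - u)]))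
      _ ≤ 2 * C * δ := by rw [mul_comm]; gcongr

theorem isQAAP_integral_Ioi_clm_apply_comp_sub (hR : IntegrableOn (fun u => ‖R u‖) (Ioi 0))
    (hRm : ∀ x, AEStronglyMeasurable (fun u => R u x) (volume.restrict (Ioi 0)))
    (hg : IsQAAP (Ici 0) g) (hgm : AEStronglyMeasurable g) (hgC : ∀ r, ‖g r‖ ≤ C)
    (hgc : ∀ r ≠ 0, ContinuousAt g r) :
    IsQAAP (Ici 0) (fun t => ∫ u in Ioi 0, R u (g (t - u))) := by
  set A := ∫ u in Ioi (0:ℝ), ‖R u‖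
  have hA : 0 ≤ A := setIntegral_nonneg measurableSet_Ioi fun _ _ => norm_nonneg _
  have hC : 0 ≤ C := (norm_nonneg _).trans (hgC 0)
  refine ⟨(continuous_setIntegral_clm_apply_comp_sub hR hRm hgm hgC hgc).continuousOn,
    ⟨A * C, fun t _ => norm_integral_clm_apply_le hR (ae_of_all _ fun u => hgC _)⟩,
    fun ε hε => ?_⟩
  obtain ⟨T, hRT, hT⟩ := (((tendsto_setIntegral_Ioi_atTop hR).eventually
    (ge_mem_nhds (by positivity : 0 < ε / 2 / (2 * C + 1)))).and (eventually_ge_atTop 0)).exists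
  obtain ⟨L, hL, hLq⟩ := hg.2.2 (ε / 2 / (A + 1)) (by positivity)
  refine ⟨L, hL, fun a ha => ?_⟩
  obtain ⟨τ, hτ, M, hM, hτq⟩ := hLq a ha
  have hgτ : ∀ r ≥ M, ‖g (r + τ) - g r‖ ≤ ε / 2 / (A + 1) := fun r hr => by
    have hr0 : 0 ≤ r := hM.le.trans hr
    exact hτq r hr0 (by rwa [abs_of_nonneg hr0])
  refine ⟨τ, hτ, M + T, by linarith, fun t ht htM => ?_⟩
  calc _ ≤ A * (ε / 2 / (A + 1)) + 2 * C * (ε / 2 / (2 * C + 1)) :=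
        norm_integral_Ioi_clm_apply_comp_sub_sub_le hR hRm hgm hgC hT hRT hgτ
          (by rwa [abs_of_nonneg ht] at htM)
    _ ≤ ε / 2 + ε / 2 := by gcongr <;> exact mul_div_add_one_le (by positivity) (by positivity)
    _ = ε := add_halves ε

end OperatorFamily

theorem isQAAP_finite_convolution_general {X Y : Type*}
    [NormedAddCommGroup X] [NormedSpace ℝ X]
    [NormedAddCommGroup Y] [NormedSpace ℝ Y]
    (R : ℝ → X →L[ℝ] Y)
    (hRc : ∀ x : X, ContinuousOn (fun t => R t x) (Set.Ioi 0))
    (hRint : MeasureTheory.IntegrableOn (fun s => ‖R s‖) (Set.Ioi 0))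
    (f : ℝ → X) (hf : IsQAAP (Set.Ici 0) f) :
    IsQAAP (Set.Ici 0) (fun t => ∫ s in (0:ℝ)..t, (R (t - s)) (f s)) := by
  obtain ⟨C, hC⟩ := hf.2.1
  have hIci : ∀ x ∈ Ici (0:ℝ), ∀ y ∈ Ici (0:ℝ), x + y ∈ Ici 0 :=
    fun x hx y hy => mem_Ici.2 (add_nonneg hx hy)
  have hRm : ∀ x, AEStronglyMeasurable (fun u => R u x) (volume.restrict (Ioi 0)) :=
    fun x => (hRc x).aestronglyMeasurable measurableSet_Ioi
  have hgm : AEStronglyMeasurable ((Ici 0).indicator f) :=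
    (aestronglyMeasurable_indicator_iff measurableSet_Ici).2
      (hf.1.aestronglyMeasurable measurableSet_Ici)
  have hgC : ∀ r, ‖(Ici 0).indicator f r‖ ≤ C := fun r => by
    by_cases hr : r ∈ Ici (0:ℝ)
    · simpa [hr] using hC r hr
    · simpa [hr] using (norm_nonneg _).trans (hC 0 self_mem_Ici)
  have hg : IsQAAP (Ici 0) ((Ici 0).indicator f) :=
    hf.congr (fun t ht => indicator_of_mem ht f) hIci
  exact (isQAAP_integral_Ioi_clm_apply_comp_sub hRint hRm hg hgm hgC
    fun r hr => hf.1.continuousAt_indicator_Ici hr).congr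
    (fun t ht => intervalIntegral_clm_apply_sub_eq_integral_Ioi R f ht) hIci

/-- Invariance of quasi-asymptotic almost periodicity under the finite
convolution product F(t) = ∫_0^t R(t−s) f(s) ds. -/
theorem isQAAP_finite_convolution {X Y : Type*}
    [NormedAddCommGroup X] [NormedSpace ℝ X]
    [NormedAddCommGroup Y] [NormedSpace ℝ Y] [CompleteSpace Y]
    (R : ℝ → X →L[ℝ] Y)
    (hRc : ∀ x : X, ContinuousOn (fun t => R t x) (Set.Ioi 0))
    (hRint : MeasureTheory.IntegrableOn (fun s => ‖R s‖) (Set.Ioi 0))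
    (f : ℝ → X) (hf : IsQAAP (Set.Ici 0) f) :
    IsQAAP (Set.Ici 0) (fun t => ∫ s in (0:ℝ)..t, (R (t - s)) (f s)) :=
  isQAAP_finite_convolution_general R hRc hRint f hf
end

section
/- Let (R(t))_{t>0} ⊆ L(X,Y) be a strongly continuous operator family with ∫_0^∞ ‖R(s)‖ ds < ∞. If f : ℝ → X is quasi-asymptotically almost periodic, then the infinite convolution F(t) = ∫_{−∞}^{t} R(t−s) f(s) ds is quasi-asymptotically almost periodic from ℝ into Y. -/
open Set Filter MeasureTheory

/-!
Write `F (t + τ) - F t = ∫_0^∞ R s (f (t + τ - s) - f (t - s)) ds` and split at a large `N`.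
On `(0, N]` the point `t - s` stays far from the origin once `|t| ≥ N + M`, so the
quasi-period `τ` of `f` makes the integrand at most `ε ‖R s‖`; on `(N, ∞)` the integrand is
at most `2 C ‖R s‖`, and the tail `∫_N^∞ ‖R s‖ ds` is small by integrability of `‖R‖`.
-/

section

variable {X Y : Type*} [NormedAddCommGroup X] [NormedSpace ℝ X]
  [NormedAddCommGroup Y] [NormedSpace ℝ Y]

theorem aestronglyMeasurable_apply_of_continuousOn {α : Type*} [TopologicalSpace α]
    [MeasurableSpace α] [OpensMeasurableSpace α] [SecondCountableTopology α] {μ : Measure α}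
    {R : α → X →L[ℝ] Y} {S : Set α} (hS : MeasurableSet S)
    (hR : ∀ x, ContinuousOn (fun t => R t x) S) {g : α → X} (hg : StronglyMeasurable g) :
    AEStronglyMeasurable (fun t => R t (g t)) (μ.restrict S) := by
  have simple : ∀ φ : SimpleFunc α X, AEStronglyMeasurable (fun t => R t (φ t)) (μ.restrict S) := by
    intro φ
    induction φ using SimpleFunc.induction with
    | @const c s hs =>
      have heq : (fun t => R t ((SimpleFunc.piecewise s hs (SimpleFunc.const α c)
          (SimpleFunc.const α 0)) t)) = s.indicator (fun t => R t c) := by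
        ext t
        by_cases ht : t ∈ s <;> simp [SimpleFunc.piecewise_apply, ht]
      rw [heq]
      exact ((hR c).aestronglyMeasurable hS).indicator hs
    | @add φ ψ _ hφ hψ =>
      simp only [SimpleFunc.coe_add, Pi.add_apply, map_add]
      exact hφ.add hψ
  refine aestronglyMeasurable_of_tendsto_ae atTop (fun n => simple (hg.approx n)) ?_
  filter_upwards with t
  exact ((R t).continuous.tendsto _).comp (hg.tendsto_approx t)

theorem integrableOn_apply_of_norm_le {α : Type*} [TopologicalSpace α]
    [MeasurableSpace α] [OpensMeasurableSpace α] [SecondCountableTopology α] {μ : Measure α}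
    {R : α → X →L[ℝ] Y} {S : Set α} (hS : MeasurableSet S)
    (hRc : ∀ x, ContinuousOn (fun t => R t x) S) (hRint : IntegrableOn (fun t => ‖R t‖) S μ)
    {g : α → X} (hg : Continuous g) {C : ℝ} (hC : ∀ t, ‖g t‖ ≤ C) :
    IntegrableOn (fun t => R t (g t)) S μ :=
  (hRint.mul_const C).mono'
    (aestronglyMeasurable_apply_of_continuousOn hS hRc hg.stronglyMeasurable)
    (Eventually.of_forall fun t => (R t).le_opNorm_of_le (hC t))

theorem norm_setIntegral_apply_le {α : Type*} [MeasurableSpace α] {μ : Measure α}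
    {R : α → X →L[ℝ] Y} {S : Set α} (hS : MeasurableSet S)
    (hRint : IntegrableOn (fun t => ‖R t‖) S μ) {g : α → X} {C : ℝ}
    (hC : ∀ t ∈ S, ‖g t‖ ≤ C) :
    ‖∫ t in S, R t (g t) ∂μ‖ ≤ C * ∫ t in S, ‖R t‖ ∂μ := by
  rw [mul_comm, ← integral_mul_const]
  exact norm_integral_le_of_norm_le (hRint.mul_const C)
    ((ae_restrict_iff' hS).2 (Eventually.of_forall fun t ht => (R t).le_opNorm_of_le (hC t ht)))

/-- The infinite convolution `t ↦ ∫_{-∞}^t R (t - s) (f s) ds = ∫_0^∞ R s (f (t - s)) ds`. -/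
noncomputable def infiniteConvolution (R : ℝ → X →L[ℝ] Y) (f : ℝ → X) (t : ℝ) : Y :=
  ∫ s in Ioi (0:ℝ), R s (f (t - s))

variable {R : ℝ → X →L[ℝ] Y} {f : ℝ → X} {C : ℝ}

theorem continuous_infiniteConvolution (hRc : ∀ x, ContinuousOn (fun t => R t x) (Ioi 0))
    (hRint : IntegrableOn (fun s => ‖R s‖) (Ioi 0)) (hf : Continuous f)
    (hC : ∀ t, ‖f t‖ ≤ C) :
    Continuous (infiniteConvolution R f) :=
  continuous_of_dominated
    (fun _ => aestronglyMeasurable_apply_of_continuousOn measurableSet_Ioi hRc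
      (hf.comp (continuous_const.sub continuous_id)).stronglyMeasurable)
    (fun _ => Eventually.of_forall fun s => (R s).le_opNorm_of_le (hC _))
    (hRint.mul_const C)
    (Eventually.of_forall fun s => (R s).continuous.comp
      (hf.comp (continuous_id.sub continuous_const)))

theorem norm_infiniteConvolution_le (hRint : IntegrableOn (fun s => ‖R s‖) (Ioi 0))
    (hC : ∀ t, ‖f t‖ ≤ C) (t : ℝ) :
    ‖infiniteConvolution R f t‖ ≤ C * ∫ s in Ioi (0:ℝ), ‖R s‖ :=
  norm_setIntegral_apply_le measurableSet_Ioi hRint fun _ _ => hC _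

theorem norm_infiniteConvolution_add_sub_le (hRc : ∀ x, ContinuousOn (fun t => R t x) (Ioi 0))
    (hRint : IntegrableOn (fun s => ‖R s‖) (Ioi 0)) (hf : Continuous f)
    (hC : ∀ t, ‖f t‖ ≤ C) {τ M ε : ℝ} (hτ : ∀ t, M ≤ |t| → ‖f (t + τ) - f t‖ ≤ ε)
    {N : ℝ} (hN : 0 ≤ N) {t : ℝ} (ht : N + M ≤ |t|) :
    ‖infiniteConvolution R f (t + τ) - infiniteConvolution R f t‖ ≤
      ε * (∫ s in Ioi (0:ℝ), ‖R s‖) + 2 * C * ∫ s in Ioi N, ‖R s‖ := by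
  have hε : 0 ≤ ε := (norm_nonneg _).trans (hτ |M| ((le_abs_self M).trans_eq (abs_abs M).symm))
  have integrable : ∀ {g : ℝ → X} {c : ℝ}, Continuous g → (∀ s, ‖g s‖ ≤ c) →
      IntegrableOn (fun s => R s (g s)) (Ioi 0) :=
    fun hg hgC => integrableOn_apply_of_norm_le measurableSet_Ioi hRc hRint hg hgC
  have hdiff : Continuous fun s => f (t + τ - s) - f (t - s) := by fun_prop
  have hdiffC : ∀ s, ‖f (t + τ - s) - f (t - s)‖ ≤ 2 * C := fun s =>
    (norm_sub_le _ _).trans (by linarith [hC (t + τ - s), hC (t - s)])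
  have hsplit : infiniteConvolution R f (t + τ) - infiniteConvolution R f t =
      (∫ s in Ioc 0 N, R s (f (t + τ - s) - f (t - s))) +
        ∫ s in Ioi N, R s (f (t + τ - s) - f (t - s)) := by
    have hint := integrable hdiff hdiffC
    rw [← setIntegral_union (Ioc_disjoint_Ioi le_rfl) measurableSet_Ioi
      (hint.mono_set Ioc_subset_Ioi_self) (hint.mono_set (Ioi_subset_Ioi hN)),
      Ioc_union_Ioi_eq_Ioi hN, infiniteConvolution, infiniteConvolution, ← integral_sub]
    · simp only [map_sub]
    all_goals exact integrable (by fun_prop) fun s => hC _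
  have hnear : ‖∫ s in Ioc 0 N, R s (f (t + τ - s) - f (t - s))‖ ≤
      ε * ∫ s in Ioi (0:ℝ), ‖R s‖ := by
    refine (norm_setIntegral_apply_le measurableSet_Ioc (hRint.mono_set Ioc_subset_Ioi_self)
      fun s hs => ?_).trans (mul_le_mul_of_nonneg_left ?_ hε)
    · have hM : M ≤ |t - s| := by
        have := abs_sub_abs_le_abs_sub t s
        rw [abs_of_pos hs.1] at this
        linarith [hs.2]
      simpa only [sub_add_eq_add_sub] using hτ (t - s) hM
    · exact setIntegral_mono_set hRint (Eventually.of_forall fun _ => norm_nonneg _)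
        Ioc_subset_Ioi_self.eventuallyLE
  have hfar : ‖∫ s in Ioi N, R s (f (t + τ - s) - f (t - s))‖ ≤ 2 * C * ∫ s in Ioi N, ‖R s‖ :=
    norm_setIntegral_apply_le measurableSet_Ioi (hRint.mono_set (Ioi_subset_Ioi hN))
      fun s _ => hdiffC s
  rw [hsplit]
  exact (norm_add_le _ _).trans (add_le_add hnear hfar)

end

theorem isQAAP_infinite_convolution_general {X Y : Type*}
    [NormedAddCommGroup X] [NormedSpace ℝ X]
    [NormedAddCommGroup Y] [NormedSpace ℝ Y]
    (R : ℝ → X →L[ℝ] Y)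
    (hRc : ∀ x : X, ContinuousOn (fun t => R t x) (Set.Ioi 0))
    (hRint : MeasureTheory.IntegrableOn (fun s => ‖R s‖) (Set.Ioi 0))
    (f : ℝ → X) (hf : IsQAAP Set.univ f) :
    IsQAAP Set.univ (fun t => ∫ s in Set.Ioi (0:ℝ), (R s) (f (t - s))) := by
  change IsQAAP univ (infiniteConvolution R f)
  obtain ⟨hfc, ⟨C, hC⟩, hfq⟩ := hf
  replace hC : ∀ t, ‖f t‖ ≤ C := fun t => hC t trivial
  have hf : Continuous f := continuousOn_univ.mp hfc
  set I := ∫ s in Ioi (0:ℝ), ‖R s‖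
  have hI : 0 ≤ I := setIntegral_nonneg measurableSet_Ioi fun _ _ => norm_nonneg _
  refine ⟨(continuous_infiniteConvolution hRc hRint hf hC).continuousOn,
    ⟨C * I, fun t _ => norm_infiniteConvolution_le hRint hC t⟩, fun ε hε => ?_⟩
  obtain ⟨L, hL, hfL⟩ := hfq (ε / (2 * (I + 1))) (by positivity)
  obtain ⟨N, hN, hN0⟩ : ∃ N : ℝ, 2 * C * ∫ s in Ioi N, ‖R s‖ ≤ ε / 2 ∧ 0 ≤ N :=
    ((((tendsto_integral_Ioi_zero tendsto_id).const_mul (2 * C)).eventually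
      (ge_mem_nhds (by simpa using half_pos hε))).and (eventually_ge_atTop 0)).exists
  refine ⟨L, hL, fun a _ => ?_⟩
  obtain ⟨τ, hτL, M, hM, hτ⟩ := hfL a (subset_univ _)
  refine ⟨τ, hτL, N + M, by positivity, fun t _ ht => ?_⟩
  have hεI : ε / (2 * (I + 1)) * I ≤ ε / 2 :=
    calc ε / (2 * (I + 1)) * I ≤ ε / (2 * (I + 1)) * (I + 1) := by gcongr; linarith
      _ = ε / 2 := by field_simp
  calc _ ≤ ε / (2 * (I + 1)) * I + 2 * C * ∫ s in Ioi N, ‖R s‖ :=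
        norm_infiniteConvolution_add_sub_le hRc hRint hf hC (fun t ht => hτ t trivial ht) hN0 ht
    _ ≤ ε := by linarith

/-- Invariance of quasi-asymptotic almost periodicity under the infinite
convolution product F(t) = ∫_{−∞}^t R(t−s) f(s) ds = ∫_0^∞ R(s) f(t−s) ds. -/
theorem isQAAP_infinite_convolution {X Y : Type*}
    [NormedAddCommGroup X] [NormedSpace ℝ X]
    [NormedAddCommGroup Y] [NormedSpace ℝ Y] [CompleteSpace Y]
    (R : ℝ → X →L[ℝ] Y)
    (hRc : ∀ x : X, ContinuousOn (fun t => R t x) (Set.Ioi 0))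
    (hRint : MeasureTheory.IntegrableOn (fun s => ‖R s‖) (Set.Ioi 0))
    (f : ℝ → X) (hf : IsQAAP Set.univ f) :
    IsQAAP Set.univ (fun t => ∫ s in Set.Ioi (0:ℝ), (R s) (f (t - s))) :=
  isQAAP_infinite_convolution_general R hRc hRint f hf
end
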